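/- arXiv:2505.15288 — 6 statements merged into one kernel-verified Lean document; each statement's English description precedes it below -/
import Mathlib

section
/- For every p there exists N such that every semi-ladder of order N in a set system contains, as a subsequence (taking the same index set for both the elements and the sets), a comatching of order p or a ladder of order p. -/
/-- A semi-ladder of order `ℓ`. -/
def SemiLadder {U : Type*} (𝓕 : Set (Set U)) {ℓ : ℕ}
    (u : Fin ℓ → U) (F : Fin ℓ → Set U) : Prop :=
  (∀ i, F i ∈ 𝓕) ∧ (∀ i, u i ∉ F i) ∧ ∀ i j : Fin ℓ, i < j → u i ∈ F j

/-- A comatching of order `ℓ`. -/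
def Comatching {U : Type*} (𝓕 : Set (Set U)) {ℓ : ℕ}
    (u : Fin ℓ → U) (F : Fin ℓ → Set U) : Prop :=
  (∀ i, F i ∈ 𝓕) ∧ (∀ i, u i ∉ F i) ∧ ∀ i j : Fin ℓ, i ≠ j → u i ∈ F j

/-- A ladder of order `ℓ`. -/
def Ladder {U : Type*} (𝓕 : Set (Set U)) {ℓ : ℕ}
    (u : Fin ℓ → U) (F : Fin ℓ → Set U) : Prop :=
  (∀ i, F i ∈ 𝓕) ∧ (∀ i j : Fin ℓ, j ≤ i → u i ∉ F j) ∧ ∀ i j : Fin ℓ, i < j → u i ∈ F j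

/-- Two-color Ramsey theorem for pairs. -/
lemma my_ramsey : ∀ a b : ℕ, ∃ n : ℕ, ∀ (c : ℕ → ℕ → Bool) (s : Finset ℕ), n ≤ s.card →
    (∃ t ⊆ s, t.card = a ∧ ∀ i ∈ t, ∀ j ∈ t, i < j → c i j = true) ∨
    (∃ t ⊆ s, t.card = b ∧ ∀ i ∈ t, ∀ j ∈ t, i < j → c i j = false) := by
  intro a
  induction a with
  | zero =>
    intro b
    exact ⟨0, fun c s _ => Or.inl ⟨∅, Finset.empty_subset s, rfl, by simp⟩⟩
  | succ a ihA =>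
    intro b
    induction b with
    | zero =>
      exact ⟨0, fun c s _ => Or.inr ⟨∅, Finset.empty_subset s, rfl, by simp⟩⟩
    | succ b ihB =>
      obtain ⟨n1, h1⟩ := ihA (b + 1)
      obtain ⟨n2, h2⟩ := ihB
      refine ⟨n1 + n2 + 1, fun c s hs => ?_⟩
      have hne : s.Nonempty := Finset.card_pos.mp (by omega)
      set x := s.min' hne with hx
      have hxs : x ∈ s := s.min'_mem hne
      set s' := s.erase x with hs'
      have hcard' : n1 + n2 ≤ s'.card := by
        rw [hs', Finset.card_erase_of_mem hxs]
        omega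
      have hxlt : ∀ j ∈ s', x < j := by
        intro j hj
        have hjs : j ∈ s := Finset.mem_of_mem_erase hj
        have hne' : j ≠ x := Finset.ne_of_mem_erase hj
        exact lt_of_le_of_ne (s.min'_le j hjs) (Ne.symm hne')
      set sT := s'.filter (fun j => c x j = true) with hsT
      set sF := s'.filter (fun j => ¬ c x j = true) with hsF
      have hsplit : sT.card + sF.card = s'.card := Finset.card_filter_add_card_filter_not _
      rcases le_or_gt n1 sT.card with hT | hT
      · rcases h1 c sT hT with ⟨t, hts, htc, hhom⟩ | ⟨t, hts, htc, hhom⟩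
        · -- extend with x, color true
          have hxnt : x ∉ t := fun hxt => by
            have := hxlt x (Finset.mem_of_mem_filter x (hts hxt))
            omega
          refine Or.inl ⟨insert x t, ?_, ?_, ?_⟩
          · intro y hy
            rcases Finset.mem_insert.mp hy with rfl | hy
            · exact hxs
            · exact Finset.mem_of_mem_erase (Finset.mem_of_mem_filter y (hts hy))
          · rw [Finset.card_insert_of_notMem hxnt, htc]
          · intro i hi j hj hij
            rcases Finset.mem_insert.mp hi with rfl | hi
            · rcases Finset.mem_insert.mp hj with rfl | hj
              · omega
              · exact (Finset.mem_filter.mp (hts hj)).2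
            · rcases Finset.mem_insert.mp hj with rfl | hj
              · have := hxlt i (Finset.mem_of_mem_filter i (hts hi)); omega
              · exact hhom i hi j hj hij
        · exact Or.inr ⟨t, fun y hy => Finset.mem_of_mem_erase (Finset.mem_of_mem_filter y (hts hy)), htc, hhom⟩
      · have hF : n2 ≤ sF.card := by omega
        rcases h2 c sF hF with ⟨t, hts, htc, hhom⟩ | ⟨t, hts, htc, hhom⟩
        · exact Or.inl ⟨t, fun y hy => Finset.mem_of_mem_erase (Finset.mem_of_mem_filter y (hts hy)), htc, hhom⟩
        · have hxnt : x ∉ t := fun hxt => by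
            have := hxlt x (Finset.mem_of_mem_filter x (hts hxt))
            omega
          refine Or.inr ⟨insert x t, ?_, ?_, ?_⟩
          · intro y hy
            rcases Finset.mem_insert.mp hy with rfl | hy
            · exact hxs
            · exact Finset.mem_of_mem_erase (Finset.mem_of_mem_filter y (hts hy))
          · rw [Finset.card_insert_of_notMem hxnt, htc]
          · intro i hi j hj hij
            rcases Finset.mem_insert.mp hi with rfl | hi
            · rcases Finset.mem_insert.mp hj with rfl | hj
              · omega
              · have := (Finset.mem_filter.mp (hts hj)).2
                simpa using this
            · rcases Finset.mem_insert.mp hj with rfl | hj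
              · have := hxlt i (Finset.mem_of_mem_filter i (hts hi)); omega
              · exact hhom i hi j hj hij

/-- For every `p` there is `N` such that every semi-ladder of order `N` contains, as a
subsequence (on the same index set for elements and sets), a comatching of order `p`
or a ladder of order `p`. -/
theorem semiLadder_contains_comatching_or_ladder (p : ℕ) :
    ∃ N : ℕ, ∀ (U : Type) (𝓕 : Set (Set U)) (u : Fin N → U) (F : Fin N → Set U),
      SemiLadder 𝓕 u F →
      ∃ g : Fin p → Fin N, StrictMono g ∧
        (Comatching 𝓕 (u ∘ g) (F ∘ g) ∨ Ladder 𝓕 (u ∘ g) (F ∘ g)) := by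
  classical
  obtain ⟨N, hN⟩ := my_ramsey p p
  refine ⟨N, fun U 𝓕 u F hSL => ?_⟩
  obtain ⟨hF𝓕, hdiag, hlt⟩ := hSL
  -- color pair i < j by whether u j ∈ F i
  set c : ℕ → ℕ → Bool := fun i j =>
    if h : i < N ∧ j < N then decide (u ⟨j, h.2⟩ ∈ F ⟨i, h.1⟩) else true with hc
  have hcard : N ≤ (Finset.range N).card := by simp
  have key : ∀ (t : Finset ℕ), t ⊆ Finset.range N → t.card = p →
      ∃ g : Fin p → Fin N, StrictMono g ∧ ∀ i : Fin p, (g i : ℕ) ∈ t ∧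
        (∀ j : Fin p, i < j → g i < g j) := by
    intro t hts htc
    have hmemN : ∀ y ∈ t, y < N := fun y hy => Finset.mem_range.mp (hts hy)
    let e := t.orderIsoOfFin htc
    refine ⟨fun i => ⟨e i, hmemN _ (e i).2⟩, ?_, ?_⟩
    · intro i j hij
      exact (Finset.orderIsoOfFin t htc).strictMono hij
    · intro i
      exact ⟨(e i).2, fun j hij => (Finset.orderIsoOfFin t htc).strictMono hij⟩
  rcases hN c (Finset.range N) hcard with ⟨t, hts, htc, hhom⟩ | ⟨t, hts, htc, hhom⟩
  · obtain ⟨g, hmono, hg⟩ := key t hts htc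
    refine ⟨g, hmono, Or.inl ⟨fun i => hF𝓕 _, fun i => hdiag _, fun i j hij => ?_⟩⟩
    rcases lt_or_gt_of_ne hij with h | h
    · exact hlt _ _ (hmono h)
    · -- j < i : color of pair (g j, g i) is true, meaning u (g i) ∈ F (g j)
      have hcol := hhom (g j) (hg j).1 (g i) (hg i).1 (hmono h)
      rw [hc] at hcol
      simp only [(g j).2, (g i).2, and_self, dif_pos, decide_eq_true_eq] at hcol
      simpa using hcol
  · obtain ⟨g, hmono, hg⟩ := key t hts htc
    refine ⟨g, hmono, Or.inr ⟨fun i => hF𝓕 _, fun i j hji => ?_, fun i j hij => hlt _ _ (hmono hij)⟩⟩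
    rcases eq_or_lt_of_le hji with rfl | h
    · exact hdiag _
    · have hcol := hhom (g j) (hg j).1 (g i) (hg i).1 (hmono h)
      rw [hc] at hcol
      simp only [(g j).2, (g i).2, and_self, dif_pos, decide_eq_true_eq] at hcol
      simpa using hcol
end

section
/- Let G be a cograph that contains no independent set of size k (where k ≥ 1). Then the vertex set of G can be partitioned into at most k − 1 cliques. -/
/-- `G` restricted to the set `S` admits a cotree of depth at most `d`: either `S` is a
single vertex, or `S` is partitioned into parts each admitting a cotree of depth at
most `d - 1`, with all pairs between distinct parts adjacent (join node) or all pairs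
non-adjacent (union node). -/
def CotreeDepth {V : Type*} (G : SimpleGraph V) : ℕ → Set V → Prop
  | 0, _ => False
  | d + 1, S =>
      (∃ v, S = {v}) ∨
      ∃ P : Set (Set V),
        (∀ A ∈ P, A.Nonempty ∧ A ⊆ S ∧ CotreeDepth G d A) ∧
        ⋃₀ P = S ∧
        (∀ A ∈ P, ∀ B ∈ P, A ≠ B → Disjoint A B) ∧
        ((∀ A ∈ P, ∀ B ∈ P, A ≠ B → ∀ x ∈ A, ∀ y ∈ B, G.Adj x y) ∨
          (∀ A ∈ P, ∀ B ∈ P, A ≠ B → ∀ x ∈ A, ∀ y ∈ B, ¬ G.Adj x y))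

/-- `G` is a cograph: it admits a cotree of some depth. -/
def IsCograph {V : Type*} (G : SimpleGraph V) : Prop :=
  ∃ d : ℕ, CotreeDepth G d Set.univ

/-- `s` is an independent set of `G`. -/
def IsIndepSet {V : Type*} (G : SimpleGraph V) (s : Set V) : Prop :=
  ∀ x ∈ s, ∀ y ∈ s, x ≠ y → ¬ G.Adj x y

/-! Every vertex set `S` carrying a cotree can be covered by `n` cliques while containing an
independent set of size `n`. This is proved bottom-up along the cotree: at a join node the cliques of the parts
can be merged, so the larger of the two numbers works, with the larger independent set; at a union
node both the clique covers and the independent sets are placed side by side, so the numbers add.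
For the whole vertex set, the absence of an independent set of size `k` forces `n < k`. -/

namespace SimpleGraph

variable {V : Type*} {G : SimpleGraph V}

def CliqueCoverable (G : SimpleGraph V) (S : Set V) (n : ℕ) : Prop :=
  ∃ c : V → ℕ, (∀ v ∈ S, c v < n) ∧ ∀ i, G.IsClique {v ∈ S | c v = i}

/-- `S` is covered by `n` cliques and contains an independent set of size `n`; since an
independent set meets each clique at most once, this says that the clique cover number of `S`
equals its independence number. -/
def HasTightCliqueCover (G : SimpleGraph V) (S : Set V) : Prop :=
  ∃ n, G.CliqueCoverable S n ∧ ∃ t : Finset V, ↑t ⊆ S ∧ G.IsNIndepSet n t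

namespace CliqueCoverable

variable {S A B : Set V} {m n : ℕ}

theorem mono (h : G.CliqueCoverable S m) (hmn : m ≤ n) : G.CliqueCoverable S n :=
  let ⟨c, hlt, hc⟩ := h
  ⟨c, fun v hv => (hlt v hv).trans_le hmn, hc⟩

theorem union_of_isCompleteBetween (hA : G.CliqueCoverable A n) (hB : G.CliqueCoverable B n)
    (hAB : G.IsCompleteBetween A B) : G.CliqueCoverable (A ∪ B) n := by
  classical
  obtain ⟨cA, hltA, hcA⟩ := hA
  obtain ⟨cB, hltB, hcB⟩ := hB
  refine ⟨fun v => if v ∈ A then cA v else cB v, fun v hv => ?_,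
    fun i x ⟨hxS, hx⟩ y ⟨hyS, hy⟩ hxy => ?_⟩
  · by_cases hvA : v ∈ A <;> simp only [hvA, if_true, if_false]
    exacts [hltA v hvA, hltB v (hv.resolve_left hvA)]
  by_cases hxA : x ∈ A <;> by_cases hyA : y ∈ A <;>
    simp only [hxA, hyA, if_true, if_false] at hx hy
  · exact hcA i ⟨hxA, hx⟩ ⟨hyA, hy⟩ hxy
  · exact hAB hxA (hyS.resolve_left hyA)
  · exact (hAB hyA (hxS.resolve_left hxA)).symm
  · exact hcB i ⟨hxS.resolve_left hxA, hx⟩ ⟨hyS.resolve_left hyA, hy⟩ hxy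

theorem union (hA : G.CliqueCoverable A m) (hB : G.CliqueCoverable B n) :
    G.CliqueCoverable (A ∪ B) (m + n) := by
  classical
  obtain ⟨cA, hltA, hcA⟩ := hA
  obtain ⟨cB, hltB, hcB⟩ := hB
  refine ⟨fun v => if v ∈ A then cA v else m + cB v, fun v hv => ?_,
    fun i x ⟨hxS, hx⟩ y ⟨hyS, hy⟩ hxy => ?_⟩
  · by_cases hvA : v ∈ A <;> simp only [hvA, if_true, if_false]
    · exact (hltA v hvA).trans_le (Nat.le_add_right m n)
    · exact Nat.add_lt_add_left (hltB v (hv.resolve_left hvA)) m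
  -- colours below `m` are used on `A` only, those from `m` on outside `A` only
  by_cases hxA : x ∈ A <;> by_cases hyA : y ∈ A <;>
    simp only [hxA, hyA, if_true, if_false] at hx hy
  · exact hcA i ⟨hxA, hx⟩ ⟨hyA, hy⟩ hxy
  · exact absurd (hltA x hxA) (by omega)
  · exact absurd (hltA y hyA) (by omega)
  · exact hcB (i - m) ⟨hxS.resolve_left hxA, by omega⟩ ⟨hyS.resolve_left hyA, by omega⟩ hxy

end CliqueCoverable

theorem IsNIndepSet.union [DecidableEq V] {s t : Finset V} {m n : ℕ} (hs : G.IsNIndepSet m s)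
    (ht : G.IsNIndepSet n t) (hst : Gᶜ.IsCompleteBetween s t) :
    G.IsNIndepSet (m + n) (s ∪ t) := by
  refine ⟨?_, ?_⟩
  · rw [Finset.coe_union, IsIndepSet, Set.pairwise_union]
    exact ⟨hs.isIndepSet, ht.isIndepSet, fun a ha b hb _ =>
      ⟨((G.compl_adj a b).1 (hst ha hb)).2, ((G.compl_adj b a).1 (hst ha hb).symm).2⟩⟩
  · rw [Finset.card_union_of_disjoint (Finset.disjoint_coe.1 hst.disjoint), hs.card_eq,
      ht.card_eq]

namespace HasTightCliqueCover

variable {A B : Set V}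

theorem empty : G.HasTightCliqueCover ∅ :=
  ⟨0, ⟨fun _ => 0, fun _ hv => hv.elim, fun _ _ hx => hx.1.elim⟩, ∅, by simp, ⟨by simp, rfl⟩⟩

theorem singleton (v : V) : G.HasTightCliqueCover {v} :=
  ⟨1, ⟨fun _ => 0, fun _ _ => Nat.one_pos,
      fun _ _ hx _ hy hxy => absurd (hx.1.trans hy.1.symm) hxy⟩,
    {v}, by simp, ⟨by simp, rfl⟩⟩

theorem union_of_isCompleteBetween (hA : G.HasTightCliqueCover A)
    (hB : G.HasTightCliqueCover B) (hAB : G.IsCompleteBetween A B) :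
    G.HasTightCliqueCover (A ∪ B) := by
  obtain ⟨m, hcA, s, hsA, hs⟩ := hA
  obtain ⟨n, hcB, t, htB, ht⟩ := hB
  rcases le_total m n with hmn | hnm
  · exact ⟨n, (hcA.mono hmn).union_of_isCompleteBetween hcB hAB, t,
      htB.trans Set.subset_union_right, ht⟩
  · exact ⟨m, hcA.union_of_isCompleteBetween (hcB.mono hnm) hAB, s,
      hsA.trans Set.subset_union_left, hs⟩

theorem union_of_isCompleteBetween_compl (hA : G.HasTightCliqueCover A)
    (hB : G.HasTightCliqueCover B) (hAB : Gᶜ.IsCompleteBetween A B) :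
    G.HasTightCliqueCover (A ∪ B) := by
  classical
  obtain ⟨m, hcA, s, hsA, hs⟩ := hA
  obtain ⟨n, hcB, t, htB, ht⟩ := hB
  refine ⟨m + n, hcA.union hcB, s ∪ t, ?_, hs.union ht fun x hx y hy => hAB (hsA hx) (htB hy)⟩
  rw [Finset.coe_union]
  exact Set.union_subset_union hsA htB

end HasTightCliqueCover

theorem sUnion_of_isCompleteBetween (H : SimpleGraph V) {p : Set V → Prop} (empty : p ∅)
    (union : ∀ {A B}, p A → p B → H.IsCompleteBetween A B → p (A ∪ B)) {P : Set (Set V)}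
    (hP : P.Finite) (hp : ∀ A ∈ P, p A) (hH : P.Pairwise H.IsCompleteBetween) : p (⋃₀ P) := by
  induction P, hP using Set.Finite.induction_on with
  | empty => simpa using empty
  | @insert A Q hAQ _ ih =>
    rw [Set.sUnion_insert]
    refine union (hp A (Set.mem_insert A Q))
      (ih (fun B hB => hp B (Set.mem_insert_of_mem A hB)) (hH.mono (Set.subset_insert A Q))) ?_
    rintro x hx y ⟨B, hB, hyB⟩
    exact hH (Set.mem_insert A Q) (Set.mem_insert_of_mem A hB) (ne_of_mem_of_not_mem hB hAQ).symm
      hx hyB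

end SimpleGraph

theorem CotreeDepth.hasTightCliqueCover {V : Type*} [Finite V] {G : SimpleGraph V} {d : ℕ}
    {S : Set V} (h : CotreeDepth G d S) : G.HasTightCliqueCover S := by
  induction d generalizing S with
  | zero => exact h.elim
  | succ d ih =>
    rcases h with ⟨v, rfl⟩ | ⟨P, hparts, rfl, hdisj, hjoin | hunion⟩
    · exact .singleton v
    · exact G.sUnion_of_isCompleteBetween .empty .union_of_isCompleteBetween (Set.toFinite P)
        (fun A hA => ih (hparts A hA).2.2) hjoin
    · refine Gᶜ.sUnion_of_isCompleteBetween .empty .union_of_isCompleteBetween_compl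
        (Set.toFinite P) (fun A hA => ih (hparts A hA).2.2) fun A hA B hB hAB x hx y hy => ?_
      have hxy : x ≠ y := ne_of_mem_of_not_mem hx (Set.disjoint_right.1 (hdisj A hA B hB hAB) hy)
      exact (G.compl_adj x y).2 ⟨hxy, hunion A hA B hB hAB x hx y hy⟩

theorem cograph_partition_into_cliques_general {V : Type*} [Fintype V] (G : SimpleGraph V)
    (k : ℕ) (hG : IsCograph G)
    (hind : ¬ ∃ s : Finset V, s.card = k ∧ IsIndepSet G ↑s) :
    ∃ c : V → Fin (k - 1), ∀ i : Fin (k - 1), G.IsClique {v | c v = i} := by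
  obtain ⟨d, hd⟩ := hG
  obtain ⟨n, hcover, t, -, ht⟩ := hd.hasTightCliqueCover
  have hnk : n < k := by
    by_contra! hkn
    obtain ⟨s, hst, hs⟩ := Finset.exists_subset_card_eq (ht.card_eq ▸ hkn)
    exact hind ⟨s, hs, ht.isIndepSet.mono hst⟩
  obtain ⟨c, hlt, hc⟩ := hcover.mono (Nat.le_sub_one_of_lt hnk)
  exact ⟨fun v => ⟨c v, hlt v trivial⟩, fun i x hx y hy hxy =>
    hc i ⟨trivial, congrArg Fin.val hx⟩ ⟨trivial, congrArg Fin.val hy⟩ hxy⟩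

/-- A cograph with no independent set of size `k` (where `k ≥ 1`) has a partition of
its vertex set into at most `k - 1` cliques. -/
theorem cograph_partition_into_cliques {V : Type*} [Fintype V] (G : SimpleGraph V)
    (k : ℕ) (hk : 1 ≤ k) (hG : IsCograph G)
    (hind : ¬ ∃ s : Finset V, s.card = k ∧ IsIndepSet G ↑s) :
    ∃ c : V → Fin (k - 1), ∀ i : Fin (k - 1), G.IsClique {v | c v = i} :=
  cograph_partition_into_cliques_general G k hG hind
end

section
/- Let G be a cograph of depth at most d (d ≥ 1) that does not contain the complete bipartite graph K_{t,t} as an induced subgraph, for some positive integer t. Then the subchromatic number of G is at most 1 + (d − 1)(t − 1): there is a coloring of V(G) with at most 1 + (d − 1)(t − 1) colors such that each color class induces a disjoint union of cliques. -/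
/-- `G` contains `K_{t,t}` as an induced subgraph. -/
def HasInducedBiclique {V : Type*} (G : SimpleGraph V) (t : ℕ) : Prop :=
  ∃ A B : Finset V, Disjoint A B ∧ A.card = t ∧ B.card = t ∧
    (∀ a ∈ A, ∀ b ∈ B, G.Adj a b) ∧
    (∀ a ∈ A, ∀ a' ∈ A, ¬ G.Adj a a') ∧
    (∀ b ∈ B, ∀ b' ∈ B, ¬ G.Adj b b')

/-- `G` induces a cluster graph (disjoint union of cliques) on the set `X`. -/
def IsClusterSet {V : Type*} (G : SimpleGraph V) (X : Set V) : Prop :=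
  ∀ x ∈ X, ∀ y ∈ X, ∀ z ∈ X, G.Adj x y → G.Adj y z → x = z ∨ G.Adj x z

open Set

section Cographs

variable {V : Type*} {G : SimpleGraph V}

theorem sUnion_eq_union_sUnion_sdiff_singleton {P : Set (Set V)} {p : Set V} (hp : p ∈ P) :
    ⋃₀ P = p ∪ ⋃₀ (P \ {p}) := by
  rw [← sUnion_insert, insert_sdiff_singleton, insert_eq_of_mem hp]

/-- With `Q = G.IsClique` this is a cover of `A` by `k` cliques, with `Q = IsClusterSet G` a
subcoloring of `A` with `k` colors. -/
def IsClassColoring (Q : Set V → Prop) (A : Set V) (k : ℕ) (c : V → ℕ) : Prop :=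
  (∀ v ∈ A, c v < k) ∧ ∀ i, Q {v ∈ A | c v = i}

section ClassColoring

variable {Q Q' : Set V → Prop} {A B C : Set V} {k m n : ℕ} {c : V → ℕ}

theorem IsClassColoring.mono_colors (h : IsClassColoring Q A k c) (hkm : k ≤ m) :
    IsClassColoring Q A m c :=
  ⟨fun v hv => (h.1 v hv).trans_le hkm, h.2⟩

theorem exists_isClassColoring_of_subsingleton (hQ : ∀ S : Set V, S.Subsingleton → Q S)
    (hA : A.Subsingleton) (hk : k ≠ 0) : ∃ c, IsClassColoring Q A k c :=
  ⟨0, fun _ _ => Nat.pos_of_ne_zero hk, fun _ => hQ _ (hA.anti (sep_subset _ _))⟩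

theorem IsClassColoring.imp (h : IsClassColoring Q A k c) (hQ : ∀ S, Q S → Q' S) :
    IsClassColoring Q' A k c :=
  ⟨h.1, fun i => hQ _ (h.2 i)⟩

theorem exists_isClassColoring_union {c₁ c₂ : V → ℕ} (h₁ : IsClassColoring Q B m c₁)
    (h₂ : IsClassColoring Q C n c₂) (hBC : Disjoint B C) :
    ∃ c, IsClassColoring Q (B ∪ C) (m + n) c := by
  classical
  have hC : ∀ v ∈ C, v ∉ B := fun v hv hvB => disjoint_left.1 hBC hvB hv
  set c := B.piecewise c₁ (fun v => m + c₂ v)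
  have hcB : ∀ v ∈ B, c v = c₁ v := fun v hv => piecewise_eq_of_mem _ _ _ hv
  have hcC : ∀ v ∈ C, c v = m + c₂ v := fun v hv => piecewise_eq_of_notMem _ _ _ (hC v hv)
  refine ⟨c, ?_, fun i => ?_⟩
  · rintro v (hv | hv)
    · exact hcB v hv ▸ (h₁.1 v hv).trans_le (Nat.le_add_right m n)
    · exact hcC v hv ▸ Nat.add_lt_add_left (h₂.1 v hv) m
  · by_cases him : i < m
    · convert h₁.2 i using 1
      ext v
      constructor
      · rintro ⟨hv | hv, rfl⟩
        · exact ⟨hv, (hcB v hv).symm⟩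
        · have := hcC v hv
          omega
      · rintro ⟨hv, rfl⟩
        exact ⟨Or.inl hv, hcB v hv⟩
    · convert h₂.2 (i - m) using 1
      ext v
      constructor
      · rintro ⟨hv | hv, rfl⟩
        · have := hcB v hv ▸ h₁.1 v hv
          omega
        · have := hcC v hv
          exact ⟨hv, by omega⟩
      · rintro ⟨hv, hvi⟩
        have := hcC v hv
        exact ⟨Or.inr hv, by omega⟩

theorem exists_isClassColoring_sUnion {P : Set (Set V)} (hP : P.PairwiseDisjoint id)
    (hQ : ∀ T ⊆ ⋃₀ P, (∀ p ∈ P, Q (T ∩ p)) → Q T)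
    (h : ∀ p ∈ P, ∃ c, IsClassColoring Q p k c) :
    ∃ c, IsClassColoring Q (⋃₀ P) k c := by
  classical
  choose! cp hcp using h
  let c : V → ℕ := fun v => if hv : ∃ p ∈ P, v ∈ p then cp hv.choose v else 0
  have hc : ∀ p ∈ P, ∀ v ∈ p, c v = cp p v := by
    intro p hp v hv
    have hex : ∃ p ∈ P, v ∈ p := ⟨p, hp, hv⟩
    have hchoose : hex.choose = p :=
      hP.elim hex.choose_spec.1 hp (not_disjoint_iff.2 ⟨v, hex.choose_spec.2, hv⟩)
    simp only [c, dif_pos hex, hchoose]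
  refine ⟨c, ?_, fun i => hQ _ (sep_subset _ _) fun p hp => ?_⟩
  · rintro v ⟨p, hp, hv⟩
    exact hc p hp v hv ▸ (hcp p hp).1 v hv
  · convert (hcp p hp).2 i using 1
    ext v
    constructor
    · rintro ⟨⟨-, hvi⟩, hv⟩
      exact ⟨hv, hc p hp v hv ▸ hvi⟩
    · rintro ⟨hv, hvi⟩
      exact ⟨⟨⟨p, hp, hv⟩, (hc p hp v hv).trans hvi⟩, hv⟩

end ClassColoring

section Graph

variable {P : Set (Set V)} {T : Set V}

theorem isClusterSet_of_subsingleton (hT : T.Subsingleton) : IsClusterSet G T :=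
  fun _ hx _ _ _ hz _ _ => Or.inl (hT hx hz)

theorem SimpleGraph.IsClique.isClusterSet (hT : G.IsClique T) : IsClusterSet G T :=
  fun x hx _ _ z hz _ _ => (eq_or_ne x z).imp_right (hT hx hz)

theorem isClique_of_forall_adj_parts
    (hjoin : ∀ p ∈ P, ∀ q ∈ P, p ≠ q → ∀ x ∈ p, ∀ y ∈ q, G.Adj x y) (hT : T ⊆ ⋃₀ P)
    (h : ∀ p ∈ P, G.IsClique (T ∩ p)) : G.IsClique T := by
  intro x hx y hy hxy
  obtain ⟨p, hp, hxp⟩ := hT hx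
  obtain ⟨q, hq, hyq⟩ := hT hy
  by_cases hpq : p = q
  · subst hpq
    exact h p hp ⟨hx, hxp⟩ ⟨hy, hyq⟩ hxy
  · exact hjoin p hp q hq hpq x hxp y hyq

theorem isClusterSet_of_forall_not_adj_parts
    (hunion : ∀ p ∈ P, ∀ q ∈ P, p ≠ q → ∀ x ∈ p, ∀ y ∈ q, ¬ G.Adj x y) (hT : T ⊆ ⋃₀ P)
    (h : ∀ p ∈ P, IsClusterSet G (T ∩ p)) : IsClusterSet G T := by
  intro x hx y hy z hz hxy hyz
  obtain ⟨p, hp, hxp⟩ := hT hx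
  obtain ⟨q, hq, hyq⟩ := hT hy
  obtain ⟨r, hr, hzr⟩ := hT hz
  obtain rfl : p = q := by_contra fun hpq => hunion p hp q hq hpq x hxp y hyq hxy
  obtain rfl : p = r := by_contra fun hpr => hunion r hr p hp (Ne.symm hpr) z hzr y hyq hyz.symm
  exact h p hp x ⟨hx, hxp⟩ y ⟨hy, hyq⟩ z ⟨hz, hzr⟩ hxy hyz

namespace SimpleGraph

variable {A B C : Set V} {m n : ℕ}

theorem IndepSetFreeOn.subset (hBA : B ⊆ A) (h : G.IndepSetFreeOn A n) : G.IndepSetFreeOn B n :=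
  fun _ hs => h (hs.trans hBA)

theorem not_indepSetFreeOn_one (hA : A.Nonempty) : ¬ G.IndepSetFreeOn A 1 := by
  obtain ⟨v, hv⟩ := hA
  exact fun h => h (t := {v}) (by simpa using hv) ⟨by simp, by simp⟩

theorem not_indepSetFreeOn_union (hBC : Disjoint B C)
    (hnadj : ∀ x ∈ B, ∀ y ∈ C, ¬ G.Adj x y)
    (hB : ¬ G.IndepSetFreeOn B m) (hC : ¬ G.IndepSetFreeOn C n) :
    ¬ G.IndepSetFreeOn (B ∪ C) (m + n) := by
  classical
  simp only [IndepSetFreeOn, not_forall, not_not] at hB hC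
  obtain ⟨s, hsB, hs⟩ := hB
  obtain ⟨u, huC, hu⟩ := hC
  have hsu : Disjoint s u := Finset.disjoint_coe.1 (hBC.mono hsB huC)
  refine fun h => h (t := s ∪ u) (by push_cast; exact union_subset_union hsB huC) ⟨?_, ?_⟩
  · rw [Finset.coe_union, SimpleGraph.IsIndepSet, pairwise_union]
    refine ⟨hs.isIndepSet, hu.isIndepSet, fun x hx y hy _ => ?_⟩
    exact ⟨hnadj x (hsB hx) y (huC hy), fun hyx => hnadj x (hsB hx) y (huC hy) hyx.symm⟩
  · rw [Finset.card_union_of_disjoint hsu, hs.card_eq, hu.card_eq]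

theorem exists_not_indepSetFreeOn_and_indepSetFreeOn_succ (hA : A.Nonempty)
    (h : G.IndepSetFreeOn A (n + 1)) :
    ∃ j, j ≠ 0 ∧ j ≤ n ∧ ¬ G.IndepSetFreeOn A j ∧ G.IndepSetFreeOn A (j + 1) := by
  classical
  have hex : ∃ j, G.IndepSetFreeOn A (j + 1) := ⟨n, h⟩
  have hj0 : Nat.find hex ≠ 0 := fun h0 => not_indepSetFreeOn_one hA (h0 ▸ Nat.find_spec hex)
  refine ⟨Nat.find hex, hj0, Nat.find_min' hex h, fun hA' => ?_, Nat.find_spec hex⟩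
  obtain ⟨i, hi⟩ := Nat.exists_eq_succ_of_ne_zero hj0
  rw [hi] at hA'
  exact Nat.find_min hex (by omega) hA'

end SimpleGraph

theorem hasInducedBiclique_of_forall_adj {B C : Set V} {t : ℕ}
    (hBC : ∀ x ∈ B, ∀ y ∈ C, G.Adj x y)
    (hB : ¬ G.IndepSetFreeOn B t) (hC : ¬ G.IndepSetFreeOn C t) : HasInducedBiclique G t := by
  simp only [SimpleGraph.IndepSetFreeOn, not_forall, not_not] at hB hC
  obtain ⟨s, hsB, hs⟩ := hB
  obtain ⟨u, huC, hu⟩ := hC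
  refine ⟨s, u, Finset.disjoint_left.2 fun x hxs hxu => ?_, hs.card_eq, hu.card_eq,
    fun x hx y hy => hBC x (hsB hx) y (huC hy), ?_, ?_⟩
  · exact G.loopless.irrefl x (hBC x (hsB hxs) x (huC hxu))
  · exact fun x hx y hy hxy => hs.isIndepSet hx hy (G.ne_of_adj hxy) hxy
  · exact fun x hx y hy hxy => hu.isIndepSet hx hy (G.ne_of_adj hxy) hxy

end Graph

theorem CotreeDepth.subsingleton {A : Set V} (hA : CotreeDepth G 1 A) : A.Subsingleton := by
  rcases hA with ⟨v, rfl⟩ | ⟨P, hparts, rfl, -⟩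
  · exact subsingleton_singleton
  · rintro x ⟨p, hp, -⟩
    exact (hparts p hp).2.2.elim

/-- Perfection of cographs, in clique-cover form. At a union node, split off one part `p₀` with
independence number `j ≥ 1`; the remaining parts form a union node with independence number at
most `k - j`. -/
theorem exists_cliqueCover_of_indepSetFreeOn :
    ∀ (d k : ℕ) (A : Set V), CotreeDepth G d A → G.IndepSetFreeOn A (k + 1) →
      ∃ c, IsClassColoring G.IsClique A k c := by
  intro d
  induction d with
  | zero => exact fun _ _ h => h.elim
  | succ d ihd =>
  intro k
  induction k using Nat.strong_induction_on with
  | _ k ihk =>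
  rintro A (⟨v, rfl⟩ | ⟨P, hparts, rfl, hdisj, hjoin | hunion⟩) hα
  · have hk : k ≠ 0 := by
      rintro rfl
      exact SimpleGraph.not_indepSetFreeOn_one (singleton_nonempty v) hα
    exact exists_isClassColoring_of_subsingleton (fun S hS => hS.pairwise _)
      subsingleton_singleton hk
  · exact exists_isClassColoring_sUnion hdisj (fun T hT => isClique_of_forall_adj_parts hjoin hT)
      fun p hp => ihd k p (hparts p hp).2.2 (hα.subset (subset_sUnion_of_mem hp))
  · rcases P.eq_empty_or_nonempty with rfl | ⟨p₀, hp₀⟩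
    · exact ⟨0, by simp, fun _ => by simp⟩
    obtain ⟨hp₀ne, hp₀A, hp₀d⟩ := hparts p₀ hp₀
    obtain ⟨j, hj₀, hjk, hp₀j, hp₀j₁⟩ :=
      SimpleGraph.exists_not_indepSetFreeOn_and_indepSetFreeOn_succ hp₀ne (hα.subset hp₀A)
    set R := ⋃₀ (P \ {p₀})
    have hAR : ⋃₀ P = p₀ ∪ R := sUnion_eq_union_sUnion_sdiff_singleton hp₀
    have hp₀R : Disjoint p₀ R :=
      disjoint_sUnion_right.2 fun q hq => hdisj p₀ hp₀ q hq.1 (Ne.symm hq.2)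
    have hnadj : ∀ x ∈ p₀, ∀ y ∈ R, ¬ G.Adj x y := fun x hx y ⟨q, hq, hy⟩ =>
      hunion p₀ hp₀ q hq.1 (Ne.symm hq.2) x hx y hy
    have hRd : CotreeDepth G (d + 1) R :=
      Or.inr ⟨P \ {p₀}, fun q hq => ⟨(hparts q hq.1).1, subset_sUnion_of_mem hq,
        (hparts q hq.1).2.2⟩, rfl, fun q hq r hr => hdisj q hq.1 r hr.1,
        Or.inr fun q hq r hr => hunion q hq.1 r hr.1⟩
    have hRα : G.IndepSetFreeOn R (k - j + 1) := by
      by_contra hR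
      have := SimpleGraph.not_indepSetFreeOn_union hp₀R hnadj hp₀j hR
      rw [← hAR, show j + (k - j + 1) = k + 1 by omega] at this
      exact this hα
    obtain ⟨c₀, hc₀⟩ := ihd j p₀ hp₀d hp₀j₁
    obtain ⟨c₁, hc₁⟩ := ihk (k - j) (by omega) R hRd hRα
    rw [hAR, show k = j + (k - j) by omega]
    exact exists_isClassColoring_union hc₀ hc₁ hp₀R

theorem exists_subcoloring_sUnion_of_join {d k m : ℕ} (hK : ¬ HasInducedBiclique G (k + 1))
    {P : Set (Set V)} (hparts : ∀ p ∈ P, CotreeDepth G d p) (hdisj : P.PairwiseDisjoint id)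
    (hjoin : ∀ p ∈ P, ∀ q ∈ P, p ≠ q → ∀ x ∈ p, ∀ y ∈ q, G.Adj x y)
    (hcol : ∀ p ∈ P, ∃ c, IsClassColoring (IsClusterSet G) p m c) :
    ∃ c, IsClassColoring (IsClusterSet G) (⋃₀ P) (m + k) c := by
  have hcover : ∀ Q ⊆ P, (∀ p ∈ Q, G.IndepSetFreeOn p (k + 1)) →
      ∃ c, IsClassColoring (IsClusterSet G) (⋃₀ Q) k c := fun Q hQP hQ => by
    obtain ⟨c, hc⟩ := exists_isClassColoring_sUnion (hdisj.subset hQP)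
      (fun T hT => isClique_of_forall_adj_parts (fun p hp q hq => hjoin p (hQP hp) q (hQP hq)) hT)
      fun p hp => exists_cliqueCover_of_indepSetFreeOn d k p (hparts p (hQP hp)) (hQ p hp)
    exact ⟨c, hc.imp fun _ => SimpleGraph.IsClique.isClusterSet⟩
  by_cases h : ∃ p₀ ∈ P, ¬ G.IndepSetFreeOn p₀ (k + 1)
  · obtain ⟨p₀, hp₀, hp₀α⟩ := h
    have hrest : ∀ p ∈ P \ {p₀}, G.IndepSetFreeOn p (k + 1) := fun p hp =>
      by_contra fun hpα =>
        hK (hasInducedBiclique_of_forall_adj (hjoin p₀ hp₀ p hp.1 (Ne.symm hp.2)) hp₀α hpα)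
    obtain ⟨c₀, hc₀⟩ := hcol p₀ hp₀
    obtain ⟨c₁, hc₁⟩ := hcover (P \ {p₀}) sdiff_subset hrest
    rw [sUnion_eq_union_sUnion_sdiff_singleton hp₀]
    exact exists_isClassColoring_union hc₀ hc₁
      (disjoint_sUnion_right.2 fun q hq => hdisj hp₀ hq.1 (Ne.symm hq.2))
  · push Not at h
    obtain ⟨c, hc⟩ := hcover P subset_rfl h
    exact ⟨c, hc.mono_colors (Nat.le_add_left k m)⟩

theorem exists_subcoloring_of_cotreeDepth {k : ℕ} (hK : ¬ HasInducedBiclique G (k + 1)) :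
    ∀ (d : ℕ) (A : Set V), CotreeDepth G (d + 1) A →
      ∃ c, IsClassColoring (IsClusterSet G) A (1 + d * k) c := by
  intro d
  induction d with
  | zero =>
    exact fun A hA => exists_isClassColoring_of_subsingleton
      (fun _ => isClusterSet_of_subsingleton) hA.subsingleton (by omega)
  | succ d ih =>
  rintro A (⟨v, rfl⟩ | ⟨P, hparts, rfl, hdisj, hjoin | hunion⟩)
  · exact exists_isClassColoring_of_subsingleton (fun _ => isClusterSet_of_subsingleton)
      subsingleton_singleton (by omega)
  · rw [show 1 + (d + 1) * k = 1 + d * k + k by ring]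
    exact exists_subcoloring_sUnion_of_join hK (fun p hp => (hparts p hp).2.2) hdisj hjoin
      fun p hp => ih p (hparts p hp).2.2
  · obtain ⟨c, hc⟩ := exists_isClassColoring_sUnion hdisj
      (fun T hT => isClusterSet_of_forall_not_adj_parts hunion hT)
      fun p hp => ih p (hparts p hp).2.2
    exact ⟨c, hc.mono_colors (Nat.add_le_add_left (Nat.mul_le_mul_right k d.le_succ) 1)⟩

end Cographs

/-- A cograph of depth at most `d` with no induced `K_{t,t}` (for positive `t`) has
subchromatic number at most `1 + (d - 1)(t - 1)`: there is a coloring with that many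
colors in which every color class induces a disjoint union of cliques. -/
theorem cograph_depth_subchromatic {V : Type*} (G : SimpleGraph V) (d t : ℕ)
    (hd : 1 ≤ d) (ht : 1 ≤ t) (hG : CotreeDepth G d Set.univ)
    (hKtt : ¬ HasInducedBiclique G t) :
    ∃ c : V → Fin (1 + (d - 1) * (t - 1)),
      ∀ i, IsClusterSet G {v | c v = i} := by
  obtain ⟨d, rfl⟩ := Nat.exists_eq_add_one.2 hd
  obtain ⟨k, rfl⟩ := Nat.exists_eq_add_one.2 ht
  obtain ⟨c, hbound, hclass⟩ := exists_subcoloring_of_cotreeDepth hKtt d univ hG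
  refine ⟨fun v => ⟨c v, by simpa using hbound v trivial⟩, fun i => ?_⟩
  convert hclass i using 2
  simp [Fin.ext_iff]
end

section
/- Let (Λ, λ, T, {M_x}) be a connection model of depth at most d for a graph G. Then for every label i ∈ Λ, the induced subgraph G[λ^{-1}(i)] is a cograph of depth at most d. -/
/-- `G` restricted to the set `S` admits a connection model of depth at most `d` with
labeling `lab`: either `S` is a single vertex, or `S` is partitioned into parts each
admitting a connection model of depth at most `d - 1`, and there is a symmetric
relation `M` on labels such that vertices in distinct parts are adjacent iff their
labels are related by `M`. -/
def ConnModelDepth {V Λ : Type*} (G : SimpleGraph V) (lab : V → Λ) :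
    ℕ → Set V → Prop
  | 0, _ => False
  | d + 1, S =>
      (∃ v, S = {v}) ∨
      ∃ (P : Set (Set V)) (M : Λ → Λ → Prop),
        (∀ a b, M a b → M b a) ∧
        (∀ A ∈ P, A.Nonempty ∧ A ⊆ S ∧ ConnModelDepth G lab d A) ∧
        ⋃₀ P = S ∧
        (∀ A ∈ P, ∀ B ∈ P, A ≠ B → Disjoint A B) ∧
        (∀ A ∈ P, ∀ B ∈ P, A ≠ B → ∀ x ∈ A, ∀ y ∈ B,
          (G.Adj x y ↔ M (lab x) (lab y)))

theorem connModel_inter_class {V Λ : Type*} (G : SimpleGraph V) (lab : V → Λ) :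
    ∀ (d : ℕ) (S : Set V), ConnModelDepth G lab d S → ∀ i : Λ,
      CotreeDepth G d (S ∩ {v | lab v = i}) := by
  intro d
  induction d with
  | zero => intro S h; exact h.elim
  | succ d ih =>
    intro S h i
    rcases h with ⟨v, rfl⟩ | ⟨P, M, hMsymm, hparts, hunion, hdisj, hadj⟩
    · by_cases hv : lab v = i
      · exact Or.inl ⟨v, by ext x; simp only [Set.mem_inter_iff, Set.mem_singleton_iff, Set.mem_setOf_eq]; exact ⟨fun h => h.1, fun h => ⟨h, h ▸ hv⟩⟩⟩
      · refine Or.inr ⟨∅, ?_, ?_, ?_, Or.inl ?_⟩ <;> simp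
        ext x; simp; intro hx; subst hx; tauto
    · set c : Set V := {v | lab v = i} with hc
      refine Or.inr ⟨(fun A => A ∩ c) '' {A ∈ P | (A ∩ c).Nonempty}, ?_, ?_, ?_, ?_⟩
      · rintro A' ⟨A, ⟨hA, hAne⟩, rfl⟩
        exact ⟨hAne, Set.inter_subset_inter_left c (hparts A hA).2.1,
          ih A (hparts A hA).2.2 i⟩
      · ext x
        constructor
        · rintro ⟨A', ⟨A, ⟨hA, _⟩, rfl⟩, hxA, hxc⟩
          exact ⟨hunion ▸ ⟨A, hA, hxA⟩, hxc⟩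
        · rintro ⟨hxS, hxc⟩
          rw [← hunion] at hxS
          rcases hxS with ⟨A, hA, hxA⟩
          exact ⟨A ∩ c, ⟨A, ⟨hA, ⟨x, hxA, hxc⟩⟩, rfl⟩, hxA, hxc⟩
      · rintro A' ⟨A, ⟨hA, _⟩, rfl⟩ B' ⟨B, ⟨hB, _⟩, rfl⟩ hne
        have hAB : A ≠ B := fun h => hne (by rw [h])
        exact Set.disjoint_of_subset Set.inter_subset_left Set.inter_subset_left
          (hdisj A hA B hB hAB)
      · by_cases hM : M i i
        · left
          rintro A' ⟨A, ⟨hA, _⟩, rfl⟩ B' ⟨B, ⟨hB, _⟩, rfl⟩ hne x ⟨hxA, hxc⟩ y ⟨hyB, hyc⟩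
          have hAB : A ≠ B := fun h => hne (by rw [h])
          rw [hadj A hA B hB hAB x hxA y hyB]
          have hx : lab x = i := hxc
          have hy : lab y = i := hyc
          rw [hx, hy]; exact hM
        · right
          rintro A' ⟨A, ⟨hA, _⟩, rfl⟩ B' ⟨B, ⟨hB, _⟩, rfl⟩ hne x ⟨hxA, hxc⟩ y ⟨hyB, hyc⟩
          have hAB : A ≠ B := fun h => hne (by rw [h])
          rw [hadj A hA B hB hAB x hxA y hyB]
          have hx : lab x = i := hxc
          have hy : lab y = i := hyc
          rw [hx, hy]; exact hM

/-- If `G` admits a connection model of depth at most `d` with labeling `lab`, then for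
every label `i` the induced subgraph on the vertices with label `i` is a cograph of
depth at most `d`. -/
theorem connModel_label_class_is_cograph {V Λ : Type*} (G : SimpleGraph V)
    (lab : V → Λ) (d : ℕ) (h : ConnModelDepth G lab d Set.univ) :
    ∀ i : Λ, CotreeDepth G d {v | lab v = i} := by
  intro i
  have := connModel_inter_class G lab d Set.univ h i
  simpa using this
end

section
/- Let S = (U, F) be a set system with U ∉ F, and suppose Y ⊆ U is a subset contained in some F ∈ F. Then the semi-ladder index of the induced subsystem S[Y, F] is strictly smaller than the semi-ladder index of S: every semi-ladder of order ℓ in S[Y, F] extends to a semi-ladder of order ℓ + 1 in S. -/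
/-- The family of the induced subsystem `S[W, 𝓕]`. -/
def inducedFamily {U : Type*} (𝓕 : Set (Set U)) (W : Set U) : Set (Set U) :=
  {S | ∃ F ∈ 𝓕, S = F ∩ W}

/-- If `S = (U, 𝓕)` is a set system with `U ∉ 𝓕` and `Y ⊆ U` is contained in some
member of `𝓕`, then the semi-ladder index of `S[Y, 𝓕]` is strictly smaller than that
of `S`: every semi-ladder of order `ℓ` in `S[Y, 𝓕]` extends to one of order `ℓ + 1`
in `S`. -/
theorem semiLadderIndex_strict_drop {U : Type*} (𝓕 : Set (Set U))
    (hU : Set.univ ∉ 𝓕) (Y : Set U) (F₀ : Set U) (hF₀ : F₀ ∈ 𝓕) (hY : Y ⊆ F₀)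
    (ℓ : ℕ) (u : Fin ℓ → U) (F : Fin ℓ → Set U)
    (hu : ∀ i, u i ∈ Y) (h : SemiLadder (inducedFamily 𝓕 Y) u F) :
    ∃ (u' : Fin (ℓ + 1) → U) (F' : Fin (ℓ + 1) → Set U), SemiLadder 𝓕 u' F' := by
  obtain ⟨hmem, hnot, hlad⟩ := h
  -- choose a witness G i ∈ 𝓕 with F i = G i ∩ Y
  choose G hG hGF using hmem
  -- pick w ∉ F₀
  have hne : F₀ ≠ Set.univ := fun hh => hU (hh ▸ hF₀)
  obtain ⟨w, hw⟩ : ∃ w, w ∉ F₀ := by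
    by_contra hc
    push_neg at hc
    exact hne (Set.eq_univ_of_forall hc)
  refine ⟨Fin.snoc u w, Fin.snoc G F₀, ?_, ?_, ?_⟩
  · intro i
    refine Fin.lastCases ?_ ?_ i
    · simpa using hF₀
    · intro j; simpa using hG j
  · intro i
    refine Fin.lastCases ?_ ?_ i
    · simpa using hw
    · intro j
      simp only [Fin.snoc_castSucc]
      intro hj
      exact hnot j (by rw [hGF j]; exact ⟨hj, hu j⟩)
  · intro i j hij
    revert hij
    refine Fin.lastCases ?_ ?_ j
    · intro hij
      have : i ≠ Fin.last ℓ := hij.ne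
      rw [← Fin.castSucc_castPred i this]
      simp only [Fin.snoc_castSucc, Fin.snoc_last]
      exact hY (hu _)
    · intro j' hij
      have : i < Fin.castSucc j' := hij
      have hi : i ≠ Fin.last ℓ := (this.trans_le (Fin.le_last _)).ne
      rw [← Fin.castSucc_castPred i hi] at this ⊢
      simp only [Fin.snoc_castSucc]
      have h2 := hlad (i.castPred hi) j' (by exact_mod_cast this)
      rw [hGF j'] at h2
      exact h2.1
end

section
/- Let G be a graph of depth-d clique minor number less than t, i.e., K_t is not a depth-d minor of G. Then the 2VC dimension of the set system Balls_d(G) of radius-d balls of G is at most t − 1. -/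
/-- The radius-`d` ball around `w` in `G`. -/
def ball {V : Type*} (G : SimpleGraph V) (d : ℕ) (w : V) : Set V :=
  {v | ∃ p : G.Walk w v, p.length ≤ d}

/-- The set `S` induces in `G` a connected subgraph of radius at most `d`. -/
def ConnRadiusLE {V : Type*} (G : SimpleGraph V) (d : ℕ) (S : Set V) : Prop :=
  ∃ c ∈ S, ∀ v ∈ S, ∃ p : G.Walk c v, p.length ≤ d ∧ ∀ x ∈ p.support, x ∈ S

/-- `H` is a depth-`d` minor of `G`. -/
def IsDepthMinor {V W : Type*} (d : ℕ) (G : SimpleGraph V) (H : SimpleGraph W) : Prop :=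
  ∃ η : W → Set V,
    (∀ w, ConnRadiusLE G d (η w)) ∧
    (∀ w w' : W, w ≠ w' → Disjoint (η w) (η w')) ∧
    (∀ w w' : W, H.Adj w w' → ∃ x ∈ η w, ∃ y ∈ η w', G.Adj x y)

/-! Take `t` points `x i` of a 2-shattered set and their radius-`d` Voronoi cells. A geodesic
from `x i` to a vertex of its cell stays in the cell, so each cell is connected of radius at most
`d`. If the ball `B(w, d)` meets the points exactly in `x i` and `x j`, every vertex on a walk of
length at most `d` from `w` to `x i` is closer to `x i` than to any `x k` with `k ≠ i, j`, so the
walk from `x i` through `w` to `x j` stays in the two cells and crosses from one to the other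
along an edge. Hence the cells form a depth-`d` model of `K_t`. -/

open SimpleGraph

lemma mem_ball_iff_edist_le {V : Type*} {G : SimpleGraph V} {d : ℕ} {w v : V} :
    v ∈ ball G d w ↔ G.edist w v ≤ d := by
  constructor
  · rintro ⟨p, hp⟩
    exact (edist_le p).trans (by exact_mod_cast hp)
  · intro hle
    obtain ⟨p, hp⟩ := exists_walk_of_edist_ne_top (hle.trans_lt (ENat.natCast_lt_top d)).ne
    exact ⟨p, by exact_mod_cast hp.le.trans hle⟩

lemma SimpleGraph.Walk.edist_add_edist_le_length {V : Type*} {G : SimpleGraph V} {a b u : V}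
    (p : G.Walk a b) (hu : u ∈ p.support) : G.edist a u + G.edist u b ≤ p.length := by
  obtain ⟨q, r, rfl⟩ := Walk.mem_support_iff_exists_append.mp hu
  rw [Walk.length_append, Nat.cast_add]
  exact add_le_add (edist_le q) (edist_le r)

lemma SimpleGraph.Walk.exists_adj_of_support_subset_union {V : Type*} {G : SimpleGraph V}
    {A B : Set V} {a b : V} (p : G.Walk a b) (ha : a ∈ A) (hb : b ∈ B) (hAB : Disjoint A B)
    (hp : ∀ u ∈ p.support, u ∈ A ∪ B) : ∃ x ∈ A, ∃ y ∈ B, G.Adj x y := by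
  obtain ⟨e, he, heA, heA'⟩ := p.exists_boundary_dart A ha (Set.disjoint_right.mp hAB hb)
  have heB : e.snd ∈ B := (hp _ (p.dart_snd_mem_support_of_mem_darts he)).resolve_left heA'
  exact ⟨e.fst, heA, e.snd, heB, e.adj⟩

section VoronoiCell

variable {V ι : Type*} [LinearOrder ι] (G : SimpleGraph V) (d : ℕ) (x : ι → V)

/-- Ties between equidistant points are broken by the index, which makes the cells disjoint. -/
def voronoiCell (i : ι) : Set V :=
  {v | G.edist (x i) v ≤ d ∧ ∀ k, toLex (G.edist (x i) v, i) ≤ toLex (G.edist (x k) v, k)}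

variable {G d x}

lemma voronoiCell_disjoint {i j : ι} (hij : i ≠ j) :
    Disjoint (voronoiCell G d x i) (voronoiCell G d x j) := by
  refine Set.disjoint_left.mpr fun v hvi hvj => hij ?_
  exact congrArg (fun p => (ofLex p).2) (le_antisymm (hvi.2 j) (hvj.2 i))

lemma mem_voronoiCell_self (hx : Function.Injective x) (i : ι) : x i ∈ voronoiCell G d x i := by
  refine ⟨by simp, fun k => ?_⟩
  rcases eq_or_ne k i with rfl | hki
  · exact le_rfl
  · refine Prod.Lex.toLex_le_toLex.mpr (Or.inl ?_)
    rw [edist_self]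
    exact edist_pos_of_ne (hx.ne hki)

lemma connRadiusLE_voronoiCell (hx : Function.Injective x) (i : ι) :
    ConnRadiusLE G d (voronoiCell G d x i) := by
  refine ⟨x i, mem_voronoiCell_self hx i, fun v ⟨hvd, hv⟩ => ?_⟩
  obtain ⟨p, hp⟩ := exists_walk_of_edist_ne_top (hvd.trans_lt (ENat.natCast_lt_top d)).ne
  refine ⟨p, by exact_mod_cast hp.le.trans hvd, fun u hu => ?_⟩
  have hsplit : G.edist (x i) u + G.edist u v ≤ G.edist (x i) v :=
    hp ▸ p.edist_add_edist_le_length hu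
  have hfin : G.edist u v ≠ ⊤ := ne_top_of_le_ne_top (hvd.trans_lt (ENat.natCast_lt_top d)).ne
    (le_add_self.trans hsplit)
  refine ⟨le_self_add.trans (hsplit.trans hvd), fun k => ?_⟩
  -- going back from `v` towards `x i` cannot bring `x k` closer than `x i`
  have hk : G.edist (x k) v ≤ G.edist (x k) u + G.edist u v := G.edist_triangle
  rcases Prod.Lex.toLex_le_toLex.mp (hv k) with hlt | ⟨heq, hik⟩
  · exact Prod.Lex.toLex_le_toLex.mpr
      (Or.inl (lt_of_add_lt_add_right ((hsplit.trans_lt hlt).trans_le hk)))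
  · have hle : G.edist (x i) u ≤ G.edist (x k) u :=
      (ENat.add_le_add_iff_right hfin).mp (hsplit.trans (le_of_eq_of_le heq hk))
    exact Prod.Lex.toLex_mono ⟨hle, hik⟩

lemma mem_voronoiCell_union {i j : ι} {u : V} (hu : G.edist (x i) u ≤ d)
    (hclose : ∀ k, k ≠ i → k ≠ j → G.edist (x i) u < G.edist (x k) u) :
    u ∈ voronoiCell G d x i ∪ voronoiCell G d x j := by
  have hkey : ∀ k, k ≠ i → k ≠ j →
      toLex (G.edist (x i) u, i) < toLex (G.edist (x k) u, k) :=
    fun k hki hkj => Prod.Lex.toLex_lt_toLex.mpr (Or.inl (hclose k hki hkj))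
  rcases le_or_gt (toLex (G.edist (x i) u, i)) (toLex (G.edist (x j) u, j)) with hij | hji
  · refine Or.inl ⟨hu, fun k => ?_⟩
    rcases eq_or_ne k i with rfl | hki
    · exact le_rfl
    rcases eq_or_ne k j with rfl | hkj
    · exact hij
    · exact (hkey k hki hkj).le
  · refine Or.inr ⟨(Prod.Lex.monotone_fst _ _ hji.le).trans hu, fun k => ?_⟩
    rcases eq_or_ne k i with rfl | hki
    · exact hji.le
    rcases eq_or_ne k j with rfl | hkj
    · exact le_rfl
    · exact (hji.trans (hkey k hki hkj)).le

lemma support_subset_voronoiCell_union {i j : ι} {w : V} (P : G.Walk w (x i)) (hP : P.length ≤ d)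
    (hout : ∀ k, k ≠ i → k ≠ j → x k ∉ ball G d w) :
    ∀ u ∈ P.support, u ∈ voronoiCell G d x i ∪ voronoiCell G d x j := by
  intro u hu
  have hsplit : G.edist w u + G.edist u (x i) ≤ d :=
    (P.edist_add_edist_le_length hu).trans (by exact_mod_cast hP)
  refine mem_voronoiCell_union (G.edist_comm ▸ le_add_self.trans hsplit) fun k hki hkj => ?_
  have hfar : (d : ℕ∞) < G.edist w (x k) := not_le.mp fun h => hout k hki hkj
    (mem_ball_iff_edist_le.mpr h)
  have : G.edist w u + G.edist u (x i) < G.edist w u + G.edist u (x k) :=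
    hsplit.trans_lt (hfar.trans_le G.edist_triangle)
  rw [G.edist_comm, G.edist_comm (u := x k)]
  exact lt_of_add_lt_add_left this

end VoronoiCell

theorem isDepthMinor_completeGraph_of_shatters {V ι : Type*} [LinearOrder ι] {G : SimpleGraph V}
    {d : ℕ} {x : ι → V} (hx : Function.Injective x)
    (hshatter : ∀ i j, i ≠ j → ∃ w, ∀ k, x k ∈ ball G d w ↔ k = i ∨ k = j) :
    IsDepthMinor d G (completeGraph ι) := by
  refine ⟨voronoiCell G d x, connRadiusLE_voronoiCell hx, fun i j => voronoiCell_disjoint,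
    fun i j hij => ?_⟩
  obtain ⟨w, hw⟩ := hshatter i j hij
  have hout : ∀ k, k ≠ i → k ≠ j → x k ∉ ball G d w := fun k hki hkj hk =>
    ((hw k).mp hk).elim hki hkj
  obtain ⟨P, hP⟩ := (hw i).mpr (Or.inl rfl)
  obtain ⟨Q, hQ⟩ := (hw j).mpr (Or.inr rfl)
  refine (P.reverse.append Q).exists_adj_of_support_subset_union (mem_voronoiCell_self hx i)
    (mem_voronoiCell_self hx j) (voronoiCell_disjoint hij) fun u hu => ?_
  rcases (Walk.mem_support_append_iff _ _).mp hu with hu | hu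
  · exact support_subset_voronoiCell_union P hP hout u (by simpa using hu)
  · exact (support_subset_voronoiCell_union Q hQ (fun k hkj hki => hout k hki hkj) u hu).symm

/-- If `K_t` is not a depth-`d` minor of `G`, then the 2VC dimension of the set system
of radius-`d` balls of `G` is at most `t - 1`: every 2-shattered set has at most
`t - 1` elements. -/
theorem twoVC_balls_le_of_no_clique_minor {V : Type*} (G : SimpleGraph V) (d t : ℕ)
    (h : ¬ IsDepthMinor d G (SimpleGraph.completeGraph (Fin t)))
    (X : Finset V)
    (hX : ∀ x ∈ X, ∀ y ∈ X, x ≠ y → ∃ w : V, ball G d w ∩ ↑X = {x, y}) :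
    X.card ≤ t - 1 := by
  by_contra! hcard
  obtain ⟨f⟩ : Nonempty (Fin t ↪ X) :=
    Function.Embedding.nonempty_of_card_le <| by
      simp only [Fintype.card_fin, Fintype.card_coe]; omega
  have hx : Function.Injective fun i => (f i : V) := Subtype.val_injective.comp f.injective
  refine h (isDepthMinor_completeGraph_of_shatters hx fun i j hij => ?_)
  obtain ⟨w, hw⟩ := hX _ (f i).2 _ (f j).2 (hx.ne hij)
  refine ⟨w, fun k => ?_⟩
  simpa [(f k).2, hx.eq_iff] using Set.ext_iff.mp hw (f k)
end
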